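/- For a prime p and positive integer n with n ≡ 2 or n ≡ 4 (mod 6), the number of triples (A,B,C) of positive integers with A ≤ B ≤ C and A·B·C = p^n equals (n² + 6n + 8)/12. -/

import Mathlib

/-!
A cuboid of volume `p ^ n` has edges `p ^ a ≤ p ^ b ≤ p ^ c` with `a ≤ b ≤ c` and `a + b + c = n`,
so cuboids are counted by the number `P n` of partitions of `n` into at most three parts.
Splitting off the triples with `a = 0` (partitions into at most two parts, `n / 2 + 1` of them)
and subtracting `1` from every part of the others gives `P (n + 3) = P n + (n + 3) / 2 + 1`,
hence `P (n + 6) = P n + n + 6`, and the closed form follows by induction from `P 2 = 2`,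
`P 4 = 4`.
-/

/-- Number of cuboids with integer edge lengths and volume `N`. -/
noncomputable def cuboidCount (N : ℕ) : ℕ :=
  Set.ncard {t : ℕ × ℕ × ℕ | 0 < t.1 ∧ t.1 ≤ t.2.1 ∧ t.2.1 ≤ t.2.2 ∧ t.1 * t.2.1 * t.2.2 = N}

def sortedTriples (n : ℕ) : Finset (ℕ × ℕ × ℕ) :=
  (Finset.range (n + 1) ×ˢ Finset.range (n + 1) ×ˢ Finset.range (n + 1)).filter
    fun t => t.1 ≤ t.2.1 ∧ t.2.1 ≤ t.2.2 ∧ t.1 + t.2.1 + t.2.2 = n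

@[simp]
theorem mem_sortedTriples {n : ℕ} {t : ℕ × ℕ × ℕ} :
    t ∈ sortedTriples n ↔ t.1 ≤ t.2.1 ∧ t.2.1 ≤ t.2.2 ∧ t.1 + t.2.1 + t.2.2 = n := by
  simp only [sortedTriples, Finset.mem_filter, Finset.mem_product, Finset.mem_range]
  omega

theorem card_filter_sortedTriples_fst_eq_zero (n : ℕ) :
    ((sortedTriples n).filter (·.1 = 0)).card = n / 2 + 1 := by
  rw [← Finset.card_range (n / 2 + 1)]
  refine Finset.card_nbij' (·.2.1) (fun b => (0, b, n - b)) ?_ ?_ ?_ ?_ <;> intro t ht <;>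
    simp only [Finset.coe_filter, Finset.coe_range, Set.mem_ofPred_eq, Set.mem_Iio,
      mem_sortedTriples, Prod.ext_iff, and_true, true_and] at ht ⊢ <;>
    omega

theorem card_filter_sortedTriples_fst_ne_zero (n : ℕ) :
    ((sortedTriples (n + 3)).filter (¬·.1 = 0)).card = (sortedTriples n).card := by
  refine Finset.card_nbij' (fun t => (t.1 - 1, t.2.1 - 1, t.2.2 - 1))
    (fun t => (t.1 + 1, t.2.1 + 1, t.2.2 + 1)) ?_ ?_ ?_ ?_ <;> intro t ht <;>
    simp only [Finset.coe_filter, Finset.mem_coe, Set.mem_ofPred_eq, mem_sortedTriples,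
      Prod.ext_iff] at ht ⊢ <;>
    omega

theorem card_sortedTriples_add_three (n : ℕ) :
    (sortedTriples (n + 3)).card = (sortedTriples n).card + (n + 3) / 2 + 1 := by
  rw [← Finset.card_filter_add_card_filter_not (·.1 = 0),
    card_filter_sortedTriples_fst_eq_zero, card_filter_sortedTriples_fst_ne_zero]
  omega

theorem card_sortedTriples_add_six (n : ℕ) :
    (sortedTriples (n + 6)).card = (sortedTriples n).card + n + 6 := by
  rw [card_sortedTriples_add_three, card_sortedTriples_add_three]
  omega

theorem twelve_mul_card_sortedTriples {n : ℕ} (hn : n % 6 = 2 ∨ n % 6 = 4) :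
    12 * (sortedTriples n).card = n ^ 2 + 6 * n + 8 := by
  induction n using Nat.strong_induction_on with
  | _ n ih =>
    rcases Nat.lt_or_ge n 6 with hsmall | hlarge
    · obtain rfl | rfl : n = 2 ∨ n = 4 := by omega
      all_goals decide
    · obtain ⟨m, rfl⟩ := Nat.exists_eq_add_of_le' hlarge
      rw [card_sortedTriples_add_six, mul_add, mul_add, ih m (by omega) (by omega)]
      ring

theorem injective_pow_triple {p : ℕ} (hp : 2 ≤ p) :
    Function.Injective fun t : ℕ × ℕ × ℕ => (p ^ t.1, p ^ t.2.1, p ^ t.2.2) := by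
  intro s t h
  have hpow_inj := Nat.pow_right_injective hp
  simp only [Prod.mk.injEq] at h
  exact Prod.ext (hpow_inj h.1) (Prod.ext (hpow_inj h.2.1) (hpow_inj h.2.2))

theorem cuboids_prime_pow_eq_image {p : ℕ} (hp : p.Prime) (n : ℕ) :
    {t : ℕ × ℕ × ℕ | 0 < t.1 ∧ t.1 ≤ t.2.1 ∧ t.2.1 ≤ t.2.2 ∧ t.1 * t.2.1 * t.2.2 = p ^ n} =
      (fun t : ℕ × ℕ × ℕ => (p ^ t.1, p ^ t.2.1, p ^ t.2.2)) '' ↑(sortedTriples n) := by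
  have hpow_le (a b : ℕ) : p ^ a ≤ p ^ b ↔ a ≤ b := Nat.pow_le_pow_iff_right hp.one_lt
  ext ⟨A, B, C⟩
  simp only [Set.mem_ofPred_eq, Set.mem_image, Finset.mem_coe, mem_sortedTriples,
    Prod.mk.injEq, Prod.exists]
  constructor
  · rintro ⟨-, hAB, hBC, hABC⟩
    obtain ⟨a, -, rfl⟩ := (Nat.dvd_prime_pow hp).mp <|
      hABC ▸ dvd_mul_of_dvd_left (dvd_mul_right A B) C
    obtain ⟨b, -, rfl⟩ := (Nat.dvd_prime_pow hp).mp <|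
      hABC ▸ dvd_mul_of_dvd_left (dvd_mul_left B _) C
    obtain ⟨c, -, rfl⟩ := (Nat.dvd_prime_pow hp).mp <| hABC ▸ dvd_mul_left C _
    refine ⟨a, b, c, ⟨(hpow_le a b).mp hAB, (hpow_le b c).mp hBC, ?_⟩, rfl, rfl, rfl⟩
    exact Nat.pow_right_injective hp.two_le (by simpa only [pow_add] using hABC)
  · rintro ⟨a, b, c, ⟨hab, hbc, rfl⟩, rfl, rfl, rfl⟩
    exact ⟨pow_pos hp.pos a, (hpow_le a b).mpr hab, (hpow_le b c).mpr hbc, by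
      rw [pow_add, pow_add]⟩

theorem cuboidCount_prime_pow {p : ℕ} (hp : p.Prime) (n : ℕ) :
    cuboidCount (p ^ n) = (sortedTriples n).card := by
  rw [cuboidCount, cuboids_prime_pow_eq_image hp,
    Set.ncard_image_of_injective _ (injective_pow_triple hp.two_le), Set.ncard_coe_finset]

theorem cuboid_count_prime_pow_general (p n : ℕ) (hp : p.Prime)
    (hmod : n % 6 = 2 ∨ n % 6 = 4) :
    (cuboidCount (p ^ n) : ℚ) = ((n : ℚ) ^ 2 + 6 * n + 8) / 12 := by
  rw [cuboidCount_prime_pow hp, eq_div_iff (by norm_num), mul_comm]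
  exact_mod_cast twelve_mul_card_sortedTriples hmod

theorem cuboid_count_prime_pow (p n : ℕ) (hp : p.Prime) (hn : 0 < n)
    (hmod : n % 6 = 2 ∨ n % 6 = 4) :
    (cuboidCount (p ^ n) : ℚ) = ((n : ℚ) ^ 2 + 6 * n + 8) / 12 :=
  cuboid_count_prime_pow_general p n hp hmod
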